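/- arXiv:2111.06796 — 2 statements merged into one kernel-verified Lean document; each statement's English description precedes it below -/
import Mathlib

section
/- The univariate Laplace density with scale parameter λ⁻¹ can be written as a scale mixture of a Gaussian and an exponential: for all b ∈ ℝ and λ > 0, (λ/2)·exp(−λ|b|) = ∫₀^∞ (1/√(2πτ))·exp(−b²/(2τ)) · (λ²/2)·exp(−λ²τ/2) dτ. -/
open Real MeasureTheory

open Set in
lemma glasser (A B : ℝ) (hA : 0 < A) (hB : 0 < B) :
    ∫ u in Set.Ioi (0:ℝ), Real.exp (-(B*u - A/u)^2) = Real.sqrt π / (2*B) := by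
  set g : ℝ → ℝ := fun u => B*u - A/u with hg
  set g' : ℝ → ℝ := fun u => B + A/u^2 with hg'
  have hderiv : ∀ u ∈ Ioi (0:ℝ), HasDerivWithinAt g (g' u) (Ioi 0) u := by
    intro u hu
    have hu0 : u ≠ 0 := ne_of_gt hu
    have h1 : HasDerivAt (fun u : ℝ => B*u - A*u⁻¹) (B*1 - A*(-(u^2)⁻¹)) u :=
      ((hasDerivAt_id u).const_mul B).sub ((hasDerivAt_inv hu0).const_mul A)
    have heq : (fun u : ℝ => B*u - A*u⁻¹) = g := by
      funext v; simp [hg, div_eq_mul_inv]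
    rw [heq] at h1
    have h2 : HasDerivAt g (g' u) u := by
      convert h1 using 1
      simp only [hg']; field_simp; ring
    exact h2.hasDerivWithinAt
  have hmono : StrictMonoOn g (Ioi (0:ℝ)) := by
    intro x hx y hy hxy
    have hx0 : (0:ℝ) < x := hx
    have h1 : A/y < A/x := div_lt_div_of_pos_left hA hx0 hxy
    have h2 : B*x < B*y := by nlinarith
    simp only [hg]; linarith
  have hinj : InjOn g (Ioi (0:ℝ)) := hmono.injOn
  have himg : g '' (Ioi (0:ℝ)) = univ := by
    apply eq_univ_of_forall
    intro y
    have hs2 : (Real.sqrt (y^2 + 4*A*B))^2 = y^2 + 4*A*B := Real.sq_sqrt (by positivity)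
    set s := Real.sqrt (y^2 + 4*A*B) with hsdef
    have hsy : |y| < s := by
      nlinarith [abs_nonneg y, Real.sqrt_nonneg (y^2+4*A*B), sq_abs y]
    have hys : 0 < y + s := by have := neg_abs_le y; linarith
    have hupos : 0 < (y + s)/(2*B) := div_pos hys (by linarith)
    set u := (y+s)/(2*B) with hudef
    have hune : u ≠ 0 := ne_of_gt hupos
    refine ⟨u, mem_Ioi.mpr hupos, ?_⟩
    have hquad : B*u^2 - y*u - A = 0 := by
      rw [hudef]; field_simp; nlinarith [hs2]
    have hkey : g u - y = (B*u^2 - y*u - A)/u := by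
      simp only [hg]; field_simp; ring
    rw [hquad] at hkey
    simp at hkey
    linarith
  have key : ∫ v, Real.exp (-v^2) = ∫ u in Ioi (0:ℝ), |g' u| * Real.exp (-(g u)^2) := by
    have := integral_image_eq_integral_abs_deriv_smul measurableSet_Ioi hderiv hinj
      (fun v => Real.exp (-v^2))
    rw [himg] at this
    simpa [smul_eq_mul] using this
  have hgauss : ∫ v, Real.exp (-v^2) = Real.sqrt π := by
    simpa using integral_gaussian 1
  have hint : IntegrableOn (fun u => |g' u| * Real.exp (-(g u)^2)) (Ioi 0) := by
    have h0 : Integrable (fun v : ℝ => Real.exp (-v^2)) := by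
      simpa using integrable_exp_neg_mul_sq (b := 1) one_pos
    have := (integrableOn_image_iff_integrableOn_abs_deriv_smul measurableSet_Ioi hderiv hinj
      (fun v => Real.exp (-v^2))).mp (by rw [himg]; exact h0.integrableOn)
    simpa [smul_eq_mul] using this
  have hcont1 : ContinuousOn (fun u : ℝ => Real.exp (-(g u)^2)) (Ioi 0) := by
    apply Continuous.comp_continuousOn continuous_exp
    apply ContinuousOn.neg
    apply ContinuousOn.pow
    exact ((continuous_const.mul continuous_id).continuousOn).sub
      (continuousOn_const.div continuousOn_id (fun x hx => ne_of_gt hx))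
  have hcont2 : ContinuousOn (fun u : ℝ => A/u^2 * Real.exp (-(g u)^2)) (Ioi 0) := by
    exact (continuousOn_const.div (continuousOn_id.pow 2)
      (fun x hx => pow_ne_zero 2 (ne_of_gt hx))).mul hcont1
  have hint1 : IntegrableOn (fun u => Real.exp (-(g u)^2)) (Ioi 0) := by
    apply Integrable.mono' (hint.const_mul (1/B))
    · exact hcont1.aestronglyMeasurable measurableSet_Ioi
    · filter_upwards [ae_restrict_mem measurableSet_Ioi] with u hu
      have hu0 : 0 < u := hu
      have hgp : 0 < g' u := by
        have : 0 < A/u^2 := by positivity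
        simp only [hg']; linarith
      have h1 : B ≤ g' u := by
        have : 0 < A/u^2 := by positivity
        simp only [hg']; linarith
      rw [Real.norm_eq_abs, abs_of_pos (Real.exp_pos _), abs_of_pos hgp, one_div,
        inv_mul_eq_div, le_div_iff₀ hB]
      nlinarith [Real.exp_pos (-(g u)^2)]
  have hint2 : IntegrableOn (fun u => A/u^2 * Real.exp (-(g u)^2)) (Ioi 0) := by
    apply Integrable.mono' hint
    · exact hcont2.aestronglyMeasurable measurableSet_Ioi
    · filter_upwards [ae_restrict_mem measurableSet_Ioi] with u hu
      have hu0 : 0 < u := hu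
      have hgp : 0 < g' u := by
        have : 0 < A/u^2 := by positivity
        simp only [hg']; linarith
      rw [Real.norm_eq_abs, abs_of_pos hgp]
      rw [abs_of_pos (by positivity : (0:ℝ) < A/u^2 * Real.exp (-(g u)^2))]
      have : A/u^2 ≤ g' u := by simp only [hg']; linarith
      nlinarith [Real.exp_pos (-(g u)^2)]
  have hsplit : ∫ u in Ioi (0:ℝ), |g' u| * Real.exp (-(g u)^2)
      = B * (∫ u in Ioi (0:ℝ), Real.exp (-(g u)^2))
        + ∫ u in Ioi (0:ℝ), A/u^2 * Real.exp (-(g u)^2) := by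
    rw [← integral_const_mul, ← integral_add ((hint1.const_mul B)) hint2]
    apply setIntegral_congr_fun measurableSet_Ioi
    intro u hu
    have hu0 : 0 < u := hu
    have hgp : 0 < g' u := by
      have : 0 < A/u^2 := by positivity
      simp only [hg']; linarith
    dsimp only
    rw [abs_of_pos hgp]
    simp only [hg']; ring
  have hphi : ∫ u in Ioi (0:ℝ), Real.exp (-(g u)^2)
      = (1/B) * ∫ u in Ioi (0:ℝ), A/u^2 * Real.exp (-(g u)^2) := by
    set φ : ℝ → ℝ := fun u => A/(B*u) with hφ
    have hφderiv : ∀ u ∈ Ioi (0:ℝ), HasDerivWithinAt φ (-(A/B)/u^2) (Ioi 0) u := by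
      intro u hu
      have hu0 : u ≠ 0 := ne_of_gt hu
      have h1 : HasDerivAt (fun u : ℝ => (A/B)*u⁻¹) ((A/B)*(-(u^2)⁻¹)) u :=
        (hasDerivAt_inv hu0).const_mul (A/B)
      have heq : (fun u : ℝ => (A/B)*u⁻¹) = φ := by
        funext v; simp only [hφ]; by_cases hv : v = 0
        · simp [hv]
        · field_simp
      rw [heq] at h1
      have h2 : HasDerivAt φ (-(A/B)/u^2) u := by
        convert h1 using 1
        field_simp
      exact h2.hasDerivWithinAt
    have hφinj : InjOn φ (Ioi (0:ℝ)) := by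
      intro x hx y hy hxy
      have hx0 : (0:ℝ) < x := hx
      have hy0 : (0:ℝ) < y := hy
      simp only [hφ] at hxy
      rw [div_eq_div_iff (by positivity) (by positivity)] at hxy
      have h1 := mul_left_cancel₀ (ne_of_gt hA) hxy
      have h2 := mul_left_cancel₀ (ne_of_gt hB) h1
      exact h2.symm
    have hφimg : φ '' (Ioi (0:ℝ)) = Ioi (0:ℝ) := by
      ext y; constructor
      · rintro ⟨x, hx, rfl⟩
        have hx0 : (0:ℝ) < x := hx
        exact mem_Ioi.mpr (by positivity)
      · intro hy
        have hy0 : (0:ℝ) < y := hy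
        refine ⟨A/(B*y), mem_Ioi.mpr (by positivity), ?_⟩
        simp only [hφ]; field_simp
    have h3 := integral_image_eq_integral_abs_deriv_smul measurableSet_Ioi hφderiv hφinj
      (fun u => Real.exp (-(g u)^2))
    rw [hφimg] at h3
    rw [h3, ← integral_const_mul]
    apply setIntegral_congr_fun measurableSet_Ioi
    intro u hu
    have hu0 : 0 < u := hu
    have habs : |(-(A/B)/u^2)| = A/(B*u^2) := by
      rw [abs_div, abs_of_pos (by positivity : (0:ℝ) < u^2), abs_neg,
        abs_of_pos (by positivity : (0:ℝ) < A/B)]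
      field_simp
    dsimp only
    rw [smul_eq_mul, habs]
    have hgφ : g (φ u) = - g u := by
      simp only [hg, hφ]
      field_simp
      ring
    rw [hgφ]
    rw [show (-g u)^2 = (g u)^2 by ring]
    field_simp
  have hfinal : Real.sqrt π = 2*B * ∫ u in Ioi (0:ℝ), Real.exp (-(g u)^2) := by
    rw [← hgauss, key, hsplit]
    have hB0 : B ≠ 0 := ne_of_gt hB
    rw [hphi]
    field_simp
    ring
  rw [hfinal]
  exact (mul_div_cancel_left₀ _ (by positivity : (2*B:ℝ) ≠ 0)).symm

open Set in
lemma mix_aux (a B : ℝ) (ha : 0 ≤ a) (hB : 0 < B) :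
    ∫ u in Set.Ioi (0:ℝ), Real.exp (-((a/u)^2 + (B*u)^2))
      = Real.sqrt π / (2*B) * Real.exp (-(2*a*B)) := by
  rcases eq_or_lt_of_le ha with rfl | ha'
  · have : ∀ u : ℝ, Real.exp (-(((0:ℝ)/u)^2 + (B*u)^2)) = Real.exp (-(B^2) * u^2) := by
      intro u; congr 1; simp; ring
    simp_rw [this]
    rw [integral_gaussian_Ioi (B^2)]
    rw [Real.sqrt_div (le_of_lt Real.pi_pos), Real.sqrt_sq hB.le]
    simp [div_div]
    ring
  · have hcongr : ∀ u ∈ Ioi (0:ℝ), Real.exp (-((a/u)^2 + (B*u)^2))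
        = Real.exp (-(2*a*B)) * Real.exp (-(B*u - a/u)^2) := by
      intro u hu
      have hu0 : (0:ℝ) < u := hu
      rw [← Real.exp_add]
      congr 1
      field_simp
      ring
    rw [setIntegral_congr_fun measurableSet_Ioi hcongr, integral_const_mul,
      glasser a B ha' hB]
    ring

open Set in
/-- The univariate Laplace density with scale parameter `λ⁻¹` as a scale mixture of a
Gaussian and an exponential. -/
theorem laplace_scale_mixture (b : ℝ) (l : ℝ) (hl : 0 < l) :
    (l / 2) * Real.exp (-l * |b|) =
      ∫ τ in Set.Ioi (0 : ℝ),
        (1 / Real.sqrt (2 * Real.pi * τ)) * Real.exp (-b ^ 2 / (2 * τ)) *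
          ((l ^ 2 / 2) * Real.exp (-l ^ 2 * τ / 2)) := by
  have hs2 : Real.sqrt 2 * Real.sqrt 2 = 2 := Real.mul_self_sqrt (by norm_num)
  have hs2pos : (0:ℝ) < Real.sqrt 2 := Real.sqrt_pos.mpr (by norm_num)
  have hπpos : (0:ℝ) < Real.sqrt π := Real.sqrt_pos.mpr Real.pi_pos
  have hsπ : Real.sqrt π * Real.sqrt π = π := Real.mul_self_sqrt Real.pi_pos.le
  have h2π : Real.sqrt (2*π) = Real.sqrt 2 * Real.sqrt π := Real.sqrt_mul (by norm_num) π
  set a : ℝ := |b| / Real.sqrt 2 with hadef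
  set B : ℝ := l / Real.sqrt 2 with hBdef
  have ha : 0 ≤ a := by positivity
  have hB : 0 < B := by positivity
  have ha2 : a^2 = b^2/2 := by
    rw [hadef, div_pow, sq_abs]
    congr 1
    rw [sq]; exact hs2
  have hB2 : B^2 = l^2/2 := by
    rw [hBdef, div_pow]
    congr 1
    rw [sq]; exact hs2
  -- substitution τ = u^2
  set h : ℝ → ℝ := fun τ => (1 / Real.sqrt (2 * Real.pi * τ)) * Real.exp (-b ^ 2 / (2 * τ)) *
          ((l ^ 2 / 2) * Real.exp (-l ^ 2 * τ / 2)) with hh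
  have hfderiv : ∀ u ∈ Ioi (0:ℝ), HasDerivWithinAt (fun u : ℝ => u^2) (2*u) (Ioi 0) u := by
    intro u hu
    have h1 : HasDerivAt (fun u : ℝ => u^2) (2*u) u := by
      simpa using hasDerivAt_pow 2 u
    exact h1.hasDerivWithinAt
  have hfinj : InjOn (fun u : ℝ => u^2) (Ioi (0:ℝ)) := by
    intro x hx y hy hxy
    have hx0 : (0:ℝ) < x := hx
    have hy0 : (0:ℝ) < y := hy
    have hxy' : x^2 = y^2 := hxy
    nlinarith [sq_nonneg (x - y), sq_nonneg (x + y)]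
  have hfimg : (fun u : ℝ => u^2) '' (Ioi (0:ℝ)) = Ioi (0:ℝ) := by
    ext τ; constructor
    · rintro ⟨x, hx, rfl⟩
      have hx0 : (0:ℝ) < x := hx
      exact mem_Ioi.mpr (by positivity)
    · intro hτ
      have hτ0 : (0:ℝ) < τ := hτ
      exact ⟨Real.sqrt τ, mem_Ioi.mpr (Real.sqrt_pos.mpr hτ0), Real.sq_sqrt hτ0.le⟩
  have hsub : ∫ τ in Ioi (0:ℝ), h τ = ∫ u in Ioi (0:ℝ), |2*u| * h (u^2) := by
    have := integral_image_eq_integral_abs_deriv_smul measurableSet_Ioi hfderiv hfinj h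
    rw [hfimg] at this
    simpa [smul_eq_mul] using this
  have hcongr : ∀ u ∈ Ioi (0:ℝ), |2*u| * h (u^2)
      = (l^2 / Real.sqrt (2*π)) * Real.exp (-((a/u)^2 + (B*u)^2)) := by
    intro u hu
    have hu0 : (0:ℝ) < u := hu
    have hsq : Real.sqrt (2 * π * u^2) = Real.sqrt (2*π) * u := by
      rw [Real.sqrt_mul (by positivity), Real.sqrt_sq hu0.le]
    rw [abs_of_pos (by positivity : (0:ℝ) < 2*u)]
    simp only [hh, hsq]
    rw [show -((a/u)^2 + (B*u)^2) = (-b^2/(2*u^2)) + (-l^2*u^2/2) by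
      rw [div_pow, mul_pow, ha2, hB2]; field_simp; ring]
    rw [Real.exp_add]
    have hne : Real.sqrt (2*π) ≠ 0 := by positivity
    field_simp
  rw [hsub, setIntegral_congr_fun measurableSet_Ioi hcongr, integral_const_mul,
    mix_aux a B ha hB]
  rw [show -(2*a*B) = -l*|b| by rw [hadef, hBdef]; field_simp; rw [Real.sq_sqrt (by norm_num : (0:ℝ) ≤ 2)]; ring]
  rw [h2π, hBdef]
  rw [show Real.sqrt π / (2 * (l / Real.sqrt 2)) = Real.sqrt π * Real.sqrt 2 / (2*l) by
    field_simp]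
  field_simp
end

section
/- For any dimension v ≥ 1, constant c > 0, and vector b ∈ ℝ^v, the multivariate Laplace kernel exp(−√c·‖b‖) is proportional (with a constant depending only on v and c) to ∫₀^∞ (2πτ²)^{−v/2} exp(−‖b‖²/(2τ²)) · (τ²)^{(v+1)/2 − 1} exp(−(c/2)·τ²) dτ², i.e., a scale mixture of a v-dimensional centered Gaussian with covariance τ² I and a Gamma((v+1)/2, 2/c) mixing density on τ². -/
open Real MeasureTheory

open Set

theorem glasser_s1 (p q : ℝ) (hp : 0 < p) (hq : 0 < q) :
    ∫ t in Ioi (0:ℝ), Real.exp (-(p * t - q / t) ^ 2) = Real.sqrt π / (2 * p) := by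
  set g : ℝ → ℝ := fun t => p * t - q / t with hg
  have hderiv : ∀ x ∈ Ioi (0:ℝ), HasDerivWithinAt g (p + q / x ^ 2) (Ioi 0) x := by
    intro x hx
    have hx0 : x ≠ 0 := ne_of_gt hx
    have h1 : HasDerivAt (fun t : ℝ => p * t) p x := by
      simpa using (hasDerivAt_id x).const_mul p
    have h2 : HasDerivAt (fun t : ℝ => q / t) (q * -(x ^ 2)⁻¹) x := by
      simpa [div_eq_mul_inv] using (hasDerivAt_inv hx0).const_mul q
    have h3 := h1.sub h2
    have : HasDerivAt g (p + q / x ^ 2) x := by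
      exact h3.congr_deriv (by ring)
    exact this.hasDerivWithinAt
  have hinj : Set.InjOn g (Ioi (0:ℝ)) := by
    intro s hs t ht h
    simp only [mem_Ioi] at hs ht
    simp only [hg] at h
    field_simp at h
    have key : (t - s) * (p * s * t + q) = 0 := by linear_combination -h
    have hpos : 0 < p * s * t + q := by positivity
    rcases mul_eq_zero.mp key with h' | h'
    · linarith [sub_eq_zero.mp h']
    · exact absurd h' (ne_of_gt hpos)
  have himg : g '' (Ioi (0:ℝ)) = Set.univ := by
    ext y
    simp only [Set.mem_image, Set.mem_univ, iff_true, mem_Ioi]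
    set D := Real.sqrt (y ^ 2 + 4 * p * q) with hD
    have hD2 : D ^ 2 = y ^ 2 + 4 * p * q := Real.sq_sqrt (by positivity)
    have hDpos : |y| < D := by
      rw [← Real.sqrt_sq_eq_abs]
      exact Real.sqrt_lt_sqrt (by positivity) (by nlinarith)
    have hyD : 0 < y + D := by
      have : -y < D := lt_of_le_of_lt (neg_le_abs y) hDpos
      linarith
    have ht : 0 < (y + D) / (2 * p) := by positivity
    refine ⟨(y + D) / (2 * p), ht, ?_⟩
    have h1 : y + D ≠ 0 := ne_of_gt hyD
    simp only [hg]
    field_simp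
    ring_nf
    nlinarith [hD2]
  -- change of variables : ∫ ℝ gaussian = ∫ Ioi 0 (p + q/t²) e^{-g²}
  have key := integral_image_eq_integral_abs_deriv_smul measurableSet_Ioi hderiv hinj
      (fun x => Real.exp (-x ^ 2))
  rw [himg] at key
  have hgauss : ∫ x in (Set.univ : Set ℝ), Real.exp (-x ^ 2) = Real.sqrt π := by
    rw [MeasureTheory.setIntegral_univ]
    simpa using integral_gaussian 1
  rw [hgauss] at key
  have habs : ∀ x ∈ Ioi (0:ℝ), |p + q / x ^ 2| • Real.exp (-g x ^ 2)
      = (p + q / x ^ 2) * Real.exp (-g x ^ 2) := by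
    intro x hx
    simp only [mem_Ioi] at hx
    rw [smul_eq_mul, abs_of_pos (by positivity)]
  rw [MeasureTheory.setIntegral_congr_fun measurableSet_Ioi habs] at key
  -- integrability
  have hIntF : IntegrableOn (fun x => (p + q / x ^ 2) * Real.exp (-g x ^ 2)) (Ioi (0:ℝ)) := by
    have := (integrableOn_image_iff_integrableOn_abs_deriv_smul measurableSet_Ioi hderiv hinj
      (fun x => Real.exp (-x ^ 2))).mp
    rw [himg] at this
    have h0 : IntegrableOn (fun x => Real.exp (-x ^ 2)) (Set.univ : Set ℝ) := by
      rw [integrableOn_univ]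
      simpa using integrable_exp_neg_mul_sq (by norm_num : (0:ℝ) < 1)
    have := this h0
    refine this.congr_fun habs measurableSet_Ioi
  have hcontg : ContinuousOn (fun x => Real.exp (-g x ^ 2)) (Ioi (0:ℝ)) := by
    apply ContinuousOn.rexp
    apply ContinuousOn.neg
    apply ContinuousOn.pow
    exact (continuousOn_const.mul continuousOn_id).sub
      (continuousOn_const.div continuousOn_id (fun t ht => ne_of_gt ht))
  have hIntE : IntegrableOn (fun x => Real.exp (-g x ^ 2)) (Ioi (0:ℝ)) := by
    refine Integrable.mono (hIntF.const_mul (1/p)) (hcontg.aestronglyMeasurable measurableSet_Ioi) ?_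
    filter_upwards [ae_restrict_mem measurableSet_Ioi] with x hx
    simp only [mem_Ioi] at hx
    have he : 0 < Real.exp (-g x ^ 2) := Real.exp_pos _
    have h1 : 0 < q / x ^ 2 := by positivity
    rw [Real.norm_eq_abs, Real.norm_eq_abs, abs_of_pos he, abs_of_pos (by positivity)]
    rw [div_mul_eq_mul_div, le_div_iff₀ hp]
    nlinarith
  have hIntQ : IntegrableOn (fun x => (q / x ^ 2) * Real.exp (-g x ^ 2)) (Ioi (0:ℝ)) := by
    have : (fun x => (q / x ^ 2) * Real.exp (-g x ^ 2))
        = fun x => (p + q / x ^ 2) * Real.exp (-g x ^ 2) - p * Real.exp (-g x ^ 2) := by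
      ext x; ring
    rw [this]
    exact hIntF.sub (hIntE.const_mul p)
  -- second substitution: ∫ (q/t²) e^{-g²} = p ∫ e^{-g²}
  have hsub2 : ∫ x in Ioi (0:ℝ), (q / x ^ 2) * Real.exp (-g x ^ 2)
      = p * ∫ x in Ioi (0:ℝ), Real.exp (-g x ^ 2) := by
    set h : ℝ → ℝ := fun t => q / (p * t) with hh
    have hderiv2 : ∀ x ∈ Ioi (0:ℝ), HasDerivWithinAt h (-(q / p) / x ^ 2) (Ioi 0) x := by
      intro x hx
      have hx0 : x ≠ 0 := ne_of_gt hx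
      have hfun : h = fun t : ℝ => (q / p) * t⁻¹ := by
        funext t; simp only [hh]; ring
      have h2 : HasDerivAt (fun t : ℝ => (q / p) * t⁻¹) (-(q / p) / x ^ 2) x := by
        exact ((hasDerivAt_inv hx0).const_mul (q / p)).congr_deriv (by ring)
      rw [hfun]
      exact h2.hasDerivWithinAt
    have hinj2 : Set.InjOn h (Ioi (0:ℝ)) := by
      intro s hs t ht hst
      simp only [mem_Ioi] at hs ht
      simp only [hh] at hst
      rw [div_eq_div_iff (by positivity) (by positivity)] at hst
      have h1 := mul_left_cancel₀ (ne_of_gt hq) hst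
      exact (mul_left_cancel₀ (ne_of_gt hp) h1).symm
    have himg2 : h '' (Ioi (0:ℝ)) = Ioi (0:ℝ) := by
      ext y
      simp only [Set.mem_image, mem_Ioi]
      constructor
      · rintro ⟨x, hx, rfl⟩
        simp only [hh]
        positivity
      · intro hy
        refine ⟨q / (p * y), by positivity, ?_⟩
        simp only [hh]
        field_simp
    have key2 := integral_image_eq_integral_abs_deriv_smul measurableSet_Ioi hderiv2 hinj2
        (fun x => Real.exp (-g x ^ 2))
    rw [himg2] at key2
    have heq : ∀ x ∈ Ioi (0:ℝ), |(-(q / p) / x ^ 2)| • Real.exp (-g (h x) ^ 2)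
        = (1 / p) * ((q / x ^ 2) * Real.exp (-g x ^ 2)) := by
      intro x hx
      simp only [mem_Ioi] at hx
      have hgh : g (h x) = -g x := by
        simp only [hg, hh]
        field_simp
        ring
      rw [smul_eq_mul, hgh, abs_div, abs_neg, abs_of_pos (by positivity : (0:ℝ) < q / p),
        abs_of_pos (by positivity : (0:ℝ) < x ^ 2)]
      ring_nf
    rw [MeasureTheory.setIntegral_congr_fun measurableSet_Ioi heq, integral_const_mul] at key2
    rw [key2]
    field_simp
  -- combine
  have hsplit : ∫ x in Ioi (0:ℝ), (p + q / x ^ 2) * Real.exp (-g x ^ 2)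
      = (∫ x in Ioi (0:ℝ), p * Real.exp (-g x ^ 2))
        + ∫ x in Ioi (0:ℝ), (q / x ^ 2) * Real.exp (-g x ^ 2) := by
    rw [← integral_add (hIntE.const_mul p) hIntQ]
    congr 1; ext x; ring
  rw [hsplit, integral_const_mul, hsub2] at key
  have : Real.sqrt π = 2 * p * ∫ x in Ioi (0:ℝ), Real.exp (-g x ^ 2) := by
    rw [key]; ring
  rw [this]
  rw [mul_div_cancel_left₀ _ (by positivity : (2 * p : ℝ) ≠ 0)]

theorem key_integral (a b : ℝ) (ha : 0 ≤ a) (hb : 0 < b) :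
    ∫ s in Ioi (0:ℝ), s ^ (-(1:ℝ)/2) * Real.exp (-(a/s) - b*s)
      = Real.sqrt (π / b) * Real.exp (-2 * Real.sqrt (a * b)) := by
  rcases eq_or_lt_of_le ha with rfl | ha
  · -- a = 0
    have h1 : ∀ s ∈ Ioi (0:ℝ), s ^ (-(1:ℝ)/2) * Real.exp (-((0:ℝ)/s) - b*s)
        = s ^ ((1:ℝ)/2 - 1) * Real.exp (-(b * s)) := by
      intro s hs
      norm_num
    rw [MeasureTheory.setIntegral_congr_fun measurableSet_Ioi h1,
      Real.integral_rpow_mul_exp_neg_mul_Ioi (by norm_num : (0:ℝ) < 1/2) hb]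
    rw [Real.Gamma_one_half_eq, zero_mul, Real.sqrt_zero, mul_zero, Real.exp_zero, mul_one]
    rw [← Real.sqrt_eq_rpow, show π / b = (1/b) * π by ring, Real.sqrt_mul (by positivity)]
  · -- a > 0
    set f : ℝ → ℝ := fun s => s ^ (-(1:ℝ)/2) * Real.exp (-(a/s) - b*s) with hf
    have hderiv : ∀ x ∈ Ioi (0:ℝ), HasDerivWithinAt (fun t : ℝ => t ^ 2) (2 * x) (Ioi 0) x := by
      intro x hx
      simpa [mul_comm] using (hasDerivAt_pow 2 x).hasDerivWithinAt
    have hinj : Set.InjOn (fun t : ℝ => t ^ 2) (Ioi (0:ℝ)) := by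
      intro s hs t ht h
      simp only [mem_Ioi] at hs ht
      have key : (s - t) * (s + t) = 0 := by linear_combination h
      rcases mul_eq_zero.mp key with h' | h'
      · linarith [sub_eq_zero.mp h']
      · linarith
    have himg : (fun t : ℝ => t ^ 2) '' (Ioi (0:ℝ)) = Ioi (0:ℝ) := by
      ext y
      simp only [Set.mem_image, mem_Ioi]
      constructor
      · rintro ⟨x, hx, rfl⟩; positivity
      · intro hy
        exact ⟨Real.sqrt y, Real.sqrt_pos.mpr hy, Real.sq_sqrt hy.le⟩
    have key := integral_image_eq_integral_abs_deriv_smul measurableSet_Ioi hderiv hinj f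
    rw [himg] at key
    have heq : ∀ t ∈ Ioi (0:ℝ), |2 * t| • f (t ^ 2)
        = 2 * (Real.exp (-2 * Real.sqrt (a * b)) * Real.exp (-(Real.sqrt b * t - Real.sqrt a / t) ^ 2)) := by
      intro t ht
      simp only [mem_Ioi] at ht
      have ht0 : t ≠ 0 := ne_of_gt ht
      have hrpow : ((t:ℝ) ^ 2) ^ (-(1:ℝ)/2) = t⁻¹ := by
        rw [← Real.rpow_natCast t 2, ← Real.rpow_mul ht.le]
        norm_num [Real.rpow_neg_one]
      have hexp : -(a / t ^ 2) - b * t ^ 2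
          = -2 * Real.sqrt (a * b) + -(Real.sqrt b * t - Real.sqrt a / t) ^ 2 := by
        have hb2 : Real.sqrt b ^ 2 = b := Real.sq_sqrt hb.le
        have ha2 : Real.sqrt a ^ 2 = a := Real.sq_sqrt ha.le
        have hab : Real.sqrt a * Real.sqrt b = Real.sqrt (a * b) :=
          (Real.sqrt_mul ha.le b).symm
        field_simp
        linear_combination t^4 * hb2 + ha2 + (-2 * t^2) * hab
      rw [smul_eq_mul, abs_of_pos (by positivity : (0:ℝ) < 2 * t)]
      simp only [hf, hrpow, hexp, Real.exp_add]
      field_simp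
    rw [MeasureTheory.setIntegral_congr_fun measurableSet_Ioi heq, integral_const_mul,
      integral_const_mul, glasser_s1 (Real.sqrt b) (Real.sqrt a) (Real.sqrt_pos.mpr hb)
        (Real.sqrt_pos.mpr ha)] at key
    rw [key, Real.sqrt_div (le_of_lt pi_pos)]
    field_simp

/-- The multivariate Laplace kernel `exp (-√c ‖b‖)` is, up to a constant depending only
on `v` and `c`, a scale mixture of a `v`-dimensional centered Gaussian with covariance
`τ² I` and a `Gamma((v+1)/2, 2/c)` mixing density on `s = τ²`. -/
theorem multivariate_laplace_scale_mixture (v : ℕ) (hv : 1 ≤ v) (c : ℝ) (hc : 0 < c) :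
    ∃ C : ℝ, 0 < C ∧ ∀ b : EuclideanSpace ℝ (Fin v),
      Real.exp (-Real.sqrt c * ‖b‖) =
        C * ∫ s in Set.Ioi (0 : ℝ),
          (2 * Real.pi * s) ^ (-(v : ℝ) / 2) * Real.exp (-‖b‖ ^ 2 / (2 * s)) *
            (s ^ (((v : ℝ) + 1) / 2 - 1) * Real.exp (-(c / 2) * s)) := by
  refine ⟨(2*π) ^ ((v:ℝ)/2) * Real.sqrt (c/(2*π)), by positivity, ?_⟩
  intro b
  set r := ‖b‖ with hr
  have hr0 : 0 ≤ r := norm_nonneg b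
  have hcongr : ∀ s ∈ Ioi (0:ℝ),
      (2 * π * s) ^ (-(v : ℝ) / 2) * Real.exp (-r ^ 2 / (2 * s)) *
          (s ^ (((v : ℝ) + 1) / 2 - 1) * Real.exp (-(c / 2) * s))
        = (2*π) ^ (-(v:ℝ)/2) * (s ^ (-(1:ℝ)/2) * Real.exp (-((r^2/2)/s) - (c/2)*s)) := by
    intro s hs
    simp only [mem_Ioi] at hs
    have h1 : s ^ (-(v:ℝ)/2) * s ^ (((v:ℝ)+1)/2 - 1) = s ^ (-(1:ℝ)/2) := by
      rw [← Real.rpow_add hs]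
      congr 1
      ring
    have h2 : Real.exp (-r ^ 2 / (2 * s)) * Real.exp (-(c/2)*s)
        = Real.exp (-((r^2/2)/s) - (c/2)*s) := by
      rw [← Real.exp_add]
      congr 1
      ring
    rw [Real.mul_rpow (by positivity) hs.le]
    calc (2*π) ^ (-(v:ℝ)/2) * s ^ (-(v:ℝ)/2) * Real.exp (-r ^ 2 / (2 * s)) *
          (s ^ (((v:ℝ)+1)/2 - 1) * Real.exp (-(c/2)*s))
        = (2*π) ^ (-(v:ℝ)/2) * ((s ^ (-(v:ℝ)/2) * s ^ (((v:ℝ)+1)/2 - 1)) *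
            (Real.exp (-r ^ 2 / (2 * s)) * Real.exp (-(c/2)*s))) := by ring
      _ = _ := by rw [h1, h2]
  rw [MeasureTheory.setIntegral_congr_fun measurableSet_Ioi hcongr, integral_const_mul,
    key_integral (r^2/2) (c/2) (by positivity) (by positivity)]
  have e1 : Real.sqrt ((r^2/2)*(c/2)) = r * Real.sqrt c / 2 := by
    rw [show (r^2/2)*(c/2) = (r * Real.sqrt c / 2)^2 from by
      linear_combination (-(r^2)/4) * (Real.sq_sqrt hc.le)]
    exact Real.sqrt_sq (by positivity)
  have e2 : Real.exp (-2 * (r * Real.sqrt c / 2)) = Real.exp (-Real.sqrt c * r) := by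
    congr 1; ring
  have e3 : (2*π) ^ ((v:ℝ)/2) * (2*π) ^ (-(v:ℝ)/2) = 1 := by
    rw [← Real.rpow_add (by positivity), show (v:ℝ)/2 + -(v:ℝ)/2 = 0 from by ring,
      Real.rpow_zero]
  have e4 : Real.sqrt (c/(2*π)) * Real.sqrt (π/(c/2)) = 1 := by
    have h5 : (c/(2*π))*(π/(c/2)) = 1 := by field_simp
    rw [← Real.sqrt_mul (by positivity), h5, Real.sqrt_one]
  rw [e1, e2]
  rw [show (2*π) ^ ((v:ℝ)/2) * Real.sqrt (c/(2*π)) *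
      ((2*π) ^ (-(v:ℝ)/2) * (Real.sqrt (π/(c/2)) * Real.exp (-Real.sqrt c * r)))
      = ((2*π) ^ ((v:ℝ)/2) * (2*π) ^ (-(v:ℝ)/2)) *
        ((Real.sqrt (c/(2*π)) * Real.sqrt (π/(c/2))) * Real.exp (-Real.sqrt c * r)) from by ring,
    e3, e4]
  ring
end
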